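/- arXiv:2503.21783 — 2 statements merged into one kernel-verified Lean document; each statement's English description precedes it below -/
import Mathlib

section
/- Let A be the Norton–Sakuma algebra of type 2A over a field F with char F ≠ 2,3,5 (as defined above), viewed as a J(1/4)-algebra via the axis e_A. Then A satisfies the Martindale-like conditions: (i) for a ∈ A₁ or a ∈ A₀, if ta = 0 for all t ∈ A_{1/4} then a = 0; (ii) for a ∈ A₀, if ta = 0 for all t ∈ A₀ then a = 0; (iii) for a ∈ A_{1/4}, if ta = 0 for all t ∈ A₀ then a = 0. -/
/-- Basis vectors of the Norton–Sakuma algebra of type 2A. -/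
def eA (F : Type*) [Field F] : Fin 3 → F := ![1, 0, 0]
def eB (F : Type*) [Field F] : Fin 3 → F := ![0, 1, 0]
def eC (F : Type*) [Field F] : Fin 3 → F := ![0, 0, 1]

/-- The commutative bilinear multiplication of the Norton–Sakuma algebra of type 2A:
`e_X² = e_X` and `e_X e_Y = (1/8)(e_X + e_Y − e_Z)` for `{X, Y, Z} = {A, B, C}`. -/
def nsMul {F : Type*} [Field F] (x y : Fin 3 → F) : Fin 3 → F :=
  (x 0 * y 0) • eA F + (x 1 * y 1) • eB F + (x 2 * y 2) • eC F +
    ((x 0 * y 1 + x 1 * y 0) * (8 : F)⁻¹) • (eA F + eB F - eC F) +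
    ((x 0 * y 2 + x 2 * y 0) * (8 : F)⁻¹) • (eA F - eB F + eC F) +
    ((x 1 * y 2 + x 2 * y 1) * (8 : F)⁻¹) • (-eA F + eB F + eC F)

/-- The `lam`-eigenspace of left multiplication by the axis `e_A`. -/
def nsEig (F : Type*) [Field F] (lam : F) : Set (Fin 3 → F) :=
  {x | nsMul (eA F) x = lam • x}

/-- Explicit coordinate formula for `nsMul`. -/
lemma nsMul_eq {F : Type*} [Field F] (x y : Fin 3 → F) :
    nsMul x y = ![x 0 * y 0 + (x 0 * y 1 + x 1 * y 0) * (8:F)⁻¹ + (x 0 * y 2 + x 2 * y 0) * (8:F)⁻¹ - (x 1 * y 2 + x 2 * y 1) * (8:F)⁻¹,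
      x 1 * y 1 + (x 0 * y 1 + x 1 * y 0) * (8:F)⁻¹ - (x 0 * y 2 + x 2 * y 0) * (8:F)⁻¹ + (x 1 * y 2 + x 2 * y 1) * (8:F)⁻¹,
      x 2 * y 2 - (x 0 * y 1 + x 1 * y 0) * (8:F)⁻¹ + (x 0 * y 2 + x 2 * y 0) * (8:F)⁻¹ + (x 1 * y 2 + x 2 * y 1) * (8:F)⁻¹] := by
  funext i
  fin_cases i <;> simp [nsMul, eA, eB, eC] <;> ring

/-- the Norton–Sakuma algebra of type 2A (as a `J(1/4)`-algebra via the
axis `e_A`) satisfies the Martindale-like conditions (i)–(iii). -/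
theorem nortonSakuma_martindale (F : Type*) [Field F]
    (h2 : (2 : F) ≠ 0) (h3 : (3 : F) ≠ 0) (h5 : (5 : F) ≠ 0) :
    (∀ a ∈ nsEig F 1, (∀ t ∈ nsEig F ((4 : F)⁻¹), nsMul t a = 0) → a = 0) ∧
    (∀ a ∈ nsEig F 0, (∀ t ∈ nsEig F ((4 : F)⁻¹), nsMul t a = 0) → a = 0) ∧
    (∀ a ∈ nsEig F 0, (∀ t ∈ nsEig F 0, nsMul t a = 0) → a = 0) ∧
    (∀ a ∈ nsEig F ((4 : F)⁻¹), (∀ t ∈ nsEig F 0, nsMul t a = 0) → a = 0) := by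
  have h4 : (4 : F) ≠ 0 := by
    have : (4 : F) = 2 * 2 := by norm_num
    rw [this]; exact mul_ne_zero h2 h2
  have h8 : (8 : F) ≠ 0 := by
    have : (8 : F) = 2 * 4 := by norm_num
    rw [this]; exact mul_ne_zero h2 h4
  have h6 : (6 : F) ≠ 0 := by
    have : (6 : F) = 2 * 3 := by norm_num
    rw [this]; exact mul_ne_zero h2 h3
  have h30 : (30 : F) ≠ 0 := by
    have : (30 : F) = 6 * 5 := by norm_num
    rw [this]; exact mul_ne_zero h6 h5
  have h40 : (40 : F) ≠ 0 := by
    have : (40 : F) = 8 * 5 := by norm_num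
    rw [this]; exact mul_ne_zero h8 h5
  have h120 : (120 : F) ≠ 0 := by
    have : (120 : F) = 4 * 30 := by norm_num
    rw [this]; exact mul_ne_zero h4 h30
  have h24 : (24 : F) ≠ 0 := by
    have : (24 : F) = 8 * 3 := by norm_num
    rw [this]; exact mul_ne_zero h8 h3
  -- t₁ = (0, 1, -1) lies in the 1/4-eigenspace
  have ht1 : (![0, 1, -1] : Fin 3 → F) ∈ nsEig F ((4 : F)⁻¹) := by
    simp only [nsEig, Set.mem_setOf_eq, nsMul_eq]
    funext i
    fin_cases i <;> simp [eA] <;> field_simp <;> ring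
  -- t₀ = (-1, 4, 4) lies in the 0-eigenspace
  have ht0 : (![-1, 4, 4] : Fin 3 → F) ∈ nsEig F 0 := by
    simp only [nsEig, Set.mem_setOf_eq, nsMul_eq]
    funext i
    fin_cases i <;> simp [eA] <;> field_simp <;> ring
  refine ⟨?_, ?_, ?_, ?_⟩
  · -- a ∈ A₁, killed by A_{1/4}
    intro a ha h
    have h0 := congrFun (ha.out.symm.trans (nsMul_eq (eA F) a)) 0
    have h1 := congrFun (ha.out.symm.trans (nsMul_eq (eA F) a)) 1
    simp [eA] at h0 h1
    field_simp at h0 h1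
    -- h0 : a 0 * 8 = a 0 * 8 + a 1 + a 2 ;  h1 : a 1 * 8 = a 1 - a 2
    have ha1 : a 1 = 0 := by
      have e : (6 : F) * a 1 = 0 := by linear_combination h1 + h0
      exact (mul_eq_zero.mp e).resolve_left h6
    have ha2 : a 2 = 0 := by linear_combination -h0 - ha1
    have p1 := congrFun ((h _ ht1).symm.trans (nsMul_eq _ a)) 1
    simp at p1
    field_simp at p1
    -- p1 : 0 = a 1 * 8 + a 0 + a 0 + (a 2 + -a 1)
    have ha0 : a 0 = 0 := by
      have e : (2 : F) * a 0 = 0 := by linear_combination -p1 - 7 * ha1 - ha2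
      exact (mul_eq_zero.mp e).resolve_left h2
    funext i; fin_cases i <;> simp [ha0, ha1, ha2]
  · -- a ∈ A₀, killed by A_{1/4}
    intro a ha h
    have h0 := congrFun (ha.out.symm.trans (nsMul_eq (eA F) a)) 0
    have h1 := congrFun (ha.out.symm.trans (nsMul_eq (eA F) a)) 1
    simp [eA] at h0 h1
    field_simp at h0 h1
    -- h0 : 0 = a 0 * 8 + a 1 + a 2 ;  h1 : 0 = a 1 - a 2
    have p1 := congrFun ((h _ ht1).symm.trans (nsMul_eq _ a)) 1
    simp at p1
    field_simp at p1
    -- p1 : 0 = a 1 * 8 + a 0 + a 0 + (a 2 + -a 1)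
    have ha1 : a 1 = 0 := by
      have e : (30 : F) * a 1 = 0 := by linear_combination (-4 : F) * p1 + h0 - 3 * h1
      exact (mul_eq_zero.mp e).resolve_left h30
    have ha2 : a 2 = 0 := by linear_combination h1 + ha1
    have ha0 : a 0 = 0 := by
      have e : (8 : F) * a 0 = 0 := by linear_combination -h0 - ha1 - ha2
      exact (mul_eq_zero.mp e).resolve_left h8
    funext i; fin_cases i <;> simp [ha0, ha1, ha2]
  · -- a ∈ A₀, killed by A₀
    intro a ha h
    have h0 := congrFun (ha.out.symm.trans (nsMul_eq (eA F) a)) 0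
    have h1 := congrFun (ha.out.symm.trans (nsMul_eq (eA F) a)) 1
    simp [eA] at h0 h1
    field_simp at h0 h1
    -- h0 : 0 = a 0 * 8 + a 1 + a 2 ;  h1 : 0 = a 1 - a 2
    have q1 := congrFun ((h _ ht0).symm.trans (nsMul_eq _ a)) 1
    simp at q1
    field_simp at q1
    -- q1 : 0 = 4 * a 1 * 8 + (-a 1 + 4 * a 0) - (-a 2 + 4 * a 0) + (4 * a 2 + 4 * a 1)
    have ha1 : a 1 = 0 := by
      have e : (40 : F) * a 1 = 0 := by linear_combination -q1 - 5 * h1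
      exact (mul_eq_zero.mp e).resolve_left h40
    have ha2 : a 2 = 0 := by linear_combination h1 + ha1
    have ha0 : a 0 = 0 := by
      have e : (8 : F) * a 0 = 0 := by linear_combination -h0 - ha1 - ha2
      exact (mul_eq_zero.mp e).resolve_left h8
    funext i; fin_cases i <;> simp [ha0, ha1, ha2]
  · -- a ∈ A_{1/4}, killed by A₀
    intro a ha h
    have h0 := congrFun (ha.out.symm.trans (nsMul_eq (eA F) a)) 0
    have h1 := congrFun (ha.out.symm.trans (nsMul_eq (eA F) a)) 1
    simp [eA] at h0 h1
    field_simp at h0 h1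
    -- h0 : a 0 * 8 = (a 0 * 8 + a 1 + a 2) * 4 ;  h1 : a 1 * 8 = (a 1 - a 2) * 4
    have q1 := congrFun ((h _ ht0).symm.trans (nsMul_eq _ a)) 1
    simp at q1
    field_simp at q1
    -- q1 : 0 = 4 * a 1 * 8 + (-a 1 + 4 * a 0) - (-a 2 + 4 * a 0) + (4 * a 2 + 4 * a 1)
    have ha1 : a 1 = 0 := by
      have e : (120 : F) * a 1 = 0 := by linear_combination (-4 : F) * q1 - 5 * h1
      exact (mul_eq_zero.mp e).resolve_left h120
    have ha2 : a 2 = 0 := by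
      have e : (4 : F) * a 2 = 0 := by linear_combination h1 - 4 * ha1
      exact (mul_eq_zero.mp e).resolve_left h4
    have ha0 : a 0 = 0 := by
      have e : (24 : F) * a 0 = 0 := by linear_combination -h0 - 4 * ha1 - 4 * ha2
      exact (mul_eq_zero.mp e).resolve_left h24
    funext i; fin_cases i <;> simp [ha0, ha1, ha2]
end

section
/- Let (A,e) be an M(α,β)-algebra (α, β, 1, 0 pairwise distinct) satisfying the Martindale-like conditions (i)–(v), and let f be a nullifying function on A. Then f(a_β a₀, b_β) = 0 for all a₀ ∈ A₀ and a_β, b_β ∈ A_β. -/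
/-- Composite of left multiplications: `Lmul [t₁,…,t_r] x = t₁ * (t₂ * (⋯ * (t_r * x)))`. -/
def Lmul {A : Type*} [Mul A] (ts : List A) (x : A) : A := ts.foldr (· * ·) x

/-- A nullifying function on the nonempty finite sequences of `A`, with associated
positive integer `r` for axiom (V). -/
def IsNullifying {A : Type*} [NonUnitalNonAssocCommRing A] (f : List A → A) (r : ℕ) : Prop :=
  0 < r ∧
  -- (I) permutation invariance
  (∀ l l' : List A, l.Perm l' → f l = f l') ∧
  -- (II)
  (∀ s t : List A, s ≠ [] → t ≠ [] → (f (s ++ [t.sum]) = f (s ++ t) ↔ f t = 0)) ∧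
  -- (III)
  (∀ x : A, f [x] = 0) ∧
  -- (IV)
  (∀ s : List A, s ≠ [] → f (s ++ [(0 : A)]) = f s) ∧
  -- (V)
  (∀ ts : List A, ts.length = r → ∀ l : List A, Lmul ts (f l) = f (l.map (Lmul ts)))
/-- The `lam`-eigenspace (as a set) of left multiplication by `e`. -/
def eigSet {F A : Type*} [Field F] [NonUnitalNonAssocCommRing A] [Module F A]
    (e : A) (lam : F) : Set A := {x | e * x = lam • x}
/-- `(A, e)` is an `M(α,β)`-algebra: `e` idempotent, `1, 0, α, β` pairwise distinct,
`A` decomposes as the sum of the `1`-, `0`-, `α`- and `β`-eigenspaces of `L_e`, and the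
Monster-type fusion law holds. -/
structure IsMAlg {F A : Type*} [Field F] [NonUnitalNonAssocCommRing A] [Module F A]
    (e : A) (α β : F) : Prop where
  idem : e * e = e
  hα0 : α ≠ 0
  hα1 : α ≠ 1
  hβ0 : β ≠ 0
  hβ1 : β ≠ 1
  hαβ : α ≠ β
  decomp : ∀ x : A, ∃ x1 ∈ eigSet e (1 : F), ∃ x0 ∈ eigSet e (0 : F), ∃ xa ∈ eigSet e α,
    ∃ xb ∈ eigSet e β, x = x1 + x0 + xa + xb
  f11 : ∀ x ∈ eigSet e (1 : F), ∀ y ∈ eigSet e (1 : F), x * y ∈ eigSet e (1 : F)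
  f10 : ∀ x ∈ eigSet e (1 : F), ∀ y ∈ eigSet e (0 : F), x * y = 0
  f1a : ∀ x ∈ eigSet e (1 : F), ∀ y ∈ eigSet e α, x * y ∈ eigSet e α
  f1b : ∀ x ∈ eigSet e (1 : F), ∀ y ∈ eigSet e β, x * y ∈ eigSet e β
  f00 : ∀ x ∈ eigSet e (0 : F), ∀ y ∈ eigSet e (0 : F), x * y ∈ eigSet e (0 : F)
  f0a : ∀ x ∈ eigSet e (0 : F), ∀ y ∈ eigSet e α, x * y ∈ eigSet e α
  f0b : ∀ x ∈ eigSet e (0 : F), ∀ y ∈ eigSet e β, x * y ∈ eigSet e β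
  faa : ∀ x ∈ eigSet e α, ∀ y ∈ eigSet e α, ∃ z1 ∈ eigSet e (1 : F), ∃ z0 ∈ eigSet e (0 : F),
    x * y = z1 + z0
  fab : ∀ x ∈ eigSet e α, ∀ y ∈ eigSet e β, x * y ∈ eigSet e β
  fbb : ∀ x ∈ eigSet e β, ∀ y ∈ eigSet e β, ∃ z1 ∈ eigSet e (1 : F), ∃ z0 ∈ eigSet e (0 : F),
    ∃ za ∈ eigSet e α, x * y = z1 + z0 + za

/-- Martindale-like conditions (i)–(v) for an `M(α,β)`-algebra. -/
def MartindaleM {F A : Type*} [Field F] [NonUnitalNonAssocCommRing A] [Module F A]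
    (e : A) (α β : F) : Prop :=
  (∀ a ∈ eigSet e (1 : F), (∀ t ∈ eigSet e α, t * a = 0) → a = 0) ∧
  (∀ a ∈ eigSet e (0 : F), (∀ t ∈ eigSet e α, t * a = 0) → a = 0) ∧
  (∀ a ∈ eigSet e (0 : F), (∀ t ∈ eigSet e (0 : F), t * a = 0) → a = 0) ∧
  (∀ a ∈ eigSet e α, (∀ t ∈ eigSet e (0 : F), t * a = 0) → a = 0) ∧
  (∀ a ∈ eigSet e β, (∀ t ∈ eigSet e (0 : F), t * a = 0) → a = 0) ∧
  (∀ a ∈ eigSet e β, (∀ t ∈ eigSet e α, t * a = 0) → a = 0) ∧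
  (∀ a ∈ eigSet e α, (∀ t ∈ eigSet e β, t * a = 0) → a = 0)

section MAuxLemmas
set_option linter.unusedSectionVars false

variable {F A : Type*} [Field F] [NonUnitalNonAssocCommRing A] [Module F A]
    [SMulCommClass F A A] [IsScalarTower F A A]

private lemma malg_lmul_cons (a : A) (ts : List A) (x : A) :
    Lmul (a :: ts) x = a * Lmul ts x := rfl

private lemma malg_lmul_append (s t : List A) (x : A) :
    Lmul (s ++ t) x = Lmul s (Lmul t x) := by
  induction s with
  | nil => rfl
  | cons a s ih => simp only [List.cons_append, malg_lmul_cons, ih]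

private lemma malg_lmul_zero (ts : List A) : Lmul ts (0 : A) = 0 := by
  induction ts with
  | nil => rfl
  | cons a ts ih => rw [malg_lmul_cons, ih, mul_zero]

private lemma malg_lmul_add (ts : List A) (x y : A) :
    Lmul ts (x + y) = Lmul ts x + Lmul ts y := by
  induction ts with
  | nil => rfl
  | cons a ts ih => rw [malg_lmul_cons, ih, mul_add, malg_lmul_cons, malg_lmul_cons]

private lemma malg_lmul_smul (ts : List A) (c : F) (x : A) :
    Lmul ts (c • x) = c • Lmul ts x := by
  induction ts with
  | nil => rfl
  | cons a ts ih => rw [malg_lmul_cons, ih, mul_smul_comm, malg_lmul_cons]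

private lemma malg_eig_add {e : A} {lam : F} {x y : A} (hx : x ∈ eigSet e lam)
    (hy : y ∈ eigSet e lam) : x + y ∈ eigSet e lam := by
  have hx' : e * x = lam • x := hx
  have hy' : e * y = lam • y := hy
  show e * (x + y) = lam • (x + y)
  rw [mul_add, hx', hy', smul_add]

private lemma malg_eig_smul {e : A} {lam : F} (c : F) {x : A} (hx : x ∈ eigSet e lam) :
    c • x ∈ eigSet e lam := by
  have hx' : e * x = lam • x := hx
  show e * (c • x) = lam • (c • x)
  rw [mul_smul_comm, hx', smul_comm]

private lemma malg_eig_zero (e : A) (lam : F) : (0 : A) ∈ eigSet e lam := by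
  show e * 0 = lam • 0
  rw [mul_zero, smul_zero]

private lemma malg_lmul_rep {e : A} {lam : F} {x : A} (g : F) (hx : x ∈ eigSet e lam) (n : ℕ) :
    Lmul (List.replicate n (g • e)) x = (g * lam) ^ n • x := by
  induction n with
  | zero => simp [Lmul]
  | succ n ih =>
    have hx' : e * x = lam • x := hx
    rw [List.replicate_succ, malg_lmul_cons, ih, mul_smul_comm, smul_mul_assoc, hx',
      smul_smul, smul_smul, mul_assoc, ← pow_succ]

private lemma malg_lmul_rep_e {e : A} {lam : F} {x : A} (hx : x ∈ eigSet e lam) (n : ℕ) :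
    Lmul (List.replicate n e) x = lam ^ n • x := by
  induction n with
  | zero => simp [Lmul]
  | succ n ih =>
    have hx' : e * x = lam • x := hx
    rw [List.replicate_succ, malg_lmul_cons, ih, mul_smul_comm, hx', smul_smul, ← pow_succ]

end MAuxLemmas
/-- Lemma 5.3: `f(a_β a₀, b_β) = 0`. -/
theorem malg_nullifying_pair_mixed {F A : Type*} [Field F] [NonUnitalNonAssocCommRing A]
    [Module F A] [SMulCommClass F A A] [IsScalarTower F A A]
    (e : A) (α β : F) (h : IsMAlg e α β) (hm : MartindaleM e α β)
    (f : List A → A) (r : ℕ) (hf : IsNullifying f r)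
    (a0 : A) (h0 : a0 ∈ eigSet e (0 : F))
    (aβ bβ : A) (ha : aβ ∈ eigSet e β) (hb : bβ ∈ eigSet e β) :
    f [aβ * a0, bβ] = 0 := by

  classical
  obtain ⟨hrpos, hI, hII, hIII, hIV, hV⟩ := hf
  obtain ⟨m1, m2, m3, m4, m5, m6, m7⟩ := hm
  have hβ0 : β ≠ 0 := h.hβ0
  have hα0 : α ≠ 0 := h.hα0
  have hrne : r ≠ 0 := hrpos.ne'
  -- scalar cancellation
  have scancel : ∀ (k : F) (x : A), k ≠ 0 → k • x = 0 → x = 0 := by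
    intro k x hk hx
    rw [← one_smul F x, ← inv_mul_cancel₀ hk, mul_smul, hx, smul_zero]
  -- basic facts about f
  have fx0 : ∀ x : A, f [x, 0] = 0 := by
    intro x
    have h1 := hIV [x] (by simp)
    have h2 : ([x] ++ [(0:A)]) = [x, 0] := rfl
    rw [h2] at h1
    rw [h1, hIII]
  have f0x : ∀ x : A, f [0, x] = 0 := fun x =>
    (hI _ _ (List.Perm.swap x 0 [])).trans (fx0 x)
  have f00 : f [(0:A), 0] = 0 := fx0 0
  -- iterated axiom (V)
  have hVs : ∀ (k : ℕ) (ts : List A), ts.length = k * r → ∀ l : List A,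
      Lmul ts (f l) = f (l.map (Lmul ts)) := by
    intro k
    induction k with
    | zero =>
      intro ts hlen l
      have hts : ts = [] := List.length_eq_zero_iff.mp (by simpa using hlen)
      subst hts
      have hid : Lmul ([] : List A) = fun x : A => x := rfl
      rw [hid]
      simp
    | succ k ih =>
      intro ts hlen l
      have hle : r ≤ ts.length := by rw [hlen, Nat.succ_mul]; omega
      have hlen1 : (List.take r ts).length = r := by
        rw [List.length_take]; exact min_eq_left hle
      have hlen2 : (List.drop r ts).length = k * r := by
        rw [List.length_drop, hlen, Nat.succ_mul]; omega
      have hsplit : List.take r ts ++ List.drop r ts = ts := List.take_append_drop r ts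
      have hfun : (Lmul (List.take r ts)) ∘ (Lmul (List.drop r ts)) = Lmul ts := by
        funext x
        rw [Function.comp_apply, ← malg_lmul_append, hsplit]
      calc Lmul ts (f l) = Lmul (List.take r ts) (Lmul (List.drop r ts) (f l)) := by
            rw [← malg_lmul_append, hsplit]
        _ = Lmul (List.take r ts) (f (l.map (Lmul (List.drop r ts)))) := by rw [ih _ hlen2]
        _ = f ((l.map (Lmul (List.drop r ts))).map (Lmul (List.take r ts))) := hV _ hlen1 _
        _ = f (l.map (Lmul ts)) := by rw [List.map_map, hfun]
  -- action of e and β⁻¹ • e on eigenvectors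
  have he1 : ∀ x : A, x ∈ eigSet e (1:F) → e * x = x := by
    intro x hx; have hx' : e * x = (1:F) • x := hx; rw [hx', one_smul]
  have he0 : ∀ x : A, x ∈ eigSet e (0:F) → e * x = 0 := by
    intro x hx; have hx' : e * x = (0:F) • x := hx; rw [hx', zero_smul]
  have heα : ∀ x : A, x ∈ eigSet e α → e * x = α • x := fun x hx => hx
  have heβ : ∀ x : A, x ∈ eigSet e β → e * x = β • x := fun x hx => hx
  have hEβ : ∀ x : A, x ∈ eigSet e β → (β⁻¹ • e) * x = x := by
    intro x hx
    rw [smul_mul_assoc, heβ x hx, smul_smul, inv_mul_cancel₀ hβ0, one_smul]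
  have hE0 : ∀ x : A, x ∈ eigSet e (0:F) → (β⁻¹ • e) * x = 0 := by
    intro x hx
    rw [smul_mul_assoc, he0 x hx, smul_zero]
  have hEα : ∀ x : A, x ∈ eigSet e α → (β⁻¹ • e) * x = (β⁻¹ * α) • x := by
    intro x hx
    rw [smul_mul_assoc, heα x hx, smul_smul]
  -- product helpers (with commutativity)
  have hmul0β : ∀ {s x : A}, s ∈ eigSet e (0:F) → x ∈ eigSet e β → s * x ∈ eigSet e β :=
    fun hs hx => h.f0b _ hs _ hx
  have hmulαβ : ∀ {u x : A}, u ∈ eigSet e α → x ∈ eigSet e β → u * x ∈ eigSet e β :=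
    fun hu hx => h.fab _ hu _ hx
  have hmulβα : ∀ {t x : A}, t ∈ eigSet e β → x ∈ eigSet e α → t * x ∈ eigSet e β := by
    intro t x ht hx; rw [mul_comm]; exact h.fab _ hx _ ht
  have hmulα0 : ∀ {u x : A}, u ∈ eigSet e α → x ∈ eigSet e (0:F) → u * x ∈ eigSet e α := by
    intro u x hu hx; rw [mul_comm]; exact h.f0a _ hx _ hu
  have hmulα1 : ∀ {u x : A}, u ∈ eigSet e α → x ∈ eigSet e (1:F) → u * x ∈ eigSet e α := by
    intro u x hu hx; rw [mul_comm]; exact h.f1a _ hx _ hu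
  have hmul01 : ∀ {s x : A}, s ∈ eigSet e (0:F) → x ∈ eigSet e (1:F) → s * x = 0 := by
    intro s x hs hx; rw [mul_comm]; exact h.f10 _ hx _ hs
  have hmul00 : ∀ {s x : A}, s ∈ eigSet e (0:F) → x ∈ eigSet e (0:F) → s * x ∈ eigSet e (0:F) :=
    fun hs hx => h.f00 _ hs _ hx
  have hmul0α : ∀ {s x : A}, s ∈ eigSet e (0:F) → x ∈ eigSet e α → s * x ∈ eigSet e α :=
    fun hs hx => h.f0a _ hs _ hx
  have hmulβ1 : ∀ {t x : A}, t ∈ eigSet e β → x ∈ eigSet e (1:F) → t * x ∈ eigSet e β := by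
    intro t x ht hx; rw [mul_comm]; exact h.f1b _ hx _ ht
  have hmulβ0 : ∀ {t x : A}, t ∈ eigSet e β → x ∈ eigSet e (0:F) → t * x ∈ eigSet e β := by
    intro t x ht hx; rw [mul_comm]; exact h.f0b _ hx _ ht
  -- directness of the eigenspace decomposition
  have d3 : ∀ y1 yα yβ : A, y1 ∈ eigSet e (1:F) → yα ∈ eigSet e α → yβ ∈ eigSet e β →
      y1 + yα + yβ = 0 → y1 = 0 ∧ yα = 0 ∧ yβ = 0 := by
    intro y1 yα yβ h1 hA hB h0
    have T1 : y1 + α • yα + β • yβ = 0 := by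
      have hc := congrArg (fun z => e * z) h0
      simpa [mul_add, he1 y1 h1, heα yα hA, heβ yβ hB] using hc
    have T2 : y1 + (α * α) • yα + (β * β) • yβ = 0 := by
      have hc := congrArg (fun z => e * z) T1
      simpa [mul_add, he1 y1 h1, heα yα hA, heβ yβ hB, mul_smul_comm, smul_smul] using hc
    have hUV : (α - 1) • yα + (β - 1) • yβ = 0 := by
      have hdiff : (y1 + α • yα + β • yβ) - (y1 + yα + yβ) = 0 := by
        rw [T1, h0, sub_zero]
      calc (α - 1) • yα + (β - 1) • yβ
          = (y1 + α • yα + β • yβ) - (y1 + yα + yβ) := by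
            rw [sub_smul, sub_smul, one_smul, one_smul]; abel
        _ = 0 := hdiff
    have hUV2 : α • ((α - 1) • yα) + β • ((β - 1) • yβ) = 0 := by
      have hdiff : (y1 + (α * α) • yα + (β * β) • yβ) - (y1 + α • yα + β • yβ) = 0 := by
        rw [T2, T1, sub_zero]
      calc α • ((α - 1) • yα) + β • ((β - 1) • yβ)
          = (y1 + (α * α) • yα + (β * β) • yβ) - (y1 + α • yα + β • yβ) := by
            rw [smul_smul, smul_smul, mul_sub, mul_sub, mul_one, mul_one, sub_smul, sub_smul]
            abel
        _ = 0 := hdiff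
    have hVzero : (β - 1) • yβ = 0 := by
      have hU : (α - 1) • yα = -((β - 1) • yβ) :=
        eq_neg_of_add_eq_zero_left hUV
      have : (β - α) • ((β - 1) • yβ) = 0 := by
        have := hUV2
        rw [hU] at this
        rw [sub_smul]
        calc β • ((β - 1) • yβ) - α • ((β - 1) • yβ)
            = α • -((β - 1) • yβ) + β • ((β - 1) • yβ) := by
              rw [smul_neg]; abel
          _ = 0 := this
      exact scancel _ _ (sub_ne_zero.mpr (Ne.symm h.hαβ)) this
    have hyβ : yβ = 0 := scancel _ _ (sub_ne_zero.mpr h.hβ1) hVzero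
    have hyα : yα = 0 := by
      have hU : (α - 1) • yα = 0 := by
        rw [hyβ, smul_zero, add_zero] at hUV; exact hUV
      exact scancel _ _ (sub_ne_zero.mpr h.hα1) hU
    have hy1 : y1 = 0 := by
      rw [hyβ, hyα, add_zero, add_zero] at h0; exact h0
    exact ⟨hy1, hyα, hyβ⟩
  have d4 : ∀ x1 x0 xα xβ : A, x1 ∈ eigSet e (1:F) → x0 ∈ eigSet e (0:F) →
      xα ∈ eigSet e α → xβ ∈ eigSet e β → x1 + x0 + xα + xβ = 0 →
      x1 = 0 ∧ x0 = 0 ∧ xα = 0 ∧ xβ = 0 := by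
    intro x1 x0 xα xβ h1 hz hA hB hsum
    have e0 : x1 + α • xα + β • xβ = 0 := by
      have hc := congrArg (fun z => e * z) hsum
      simpa [mul_add, he1 x1 h1, he0 x0 hz, heα xα hA, heβ xβ hB] using hc
    obtain ⟨g1, gα, gβ⟩ := d3 x1 (α • xα) (β • xβ) h1 (malg_eig_smul α hA) (malg_eig_smul β hB) e0
    have hxα : xα = 0 := scancel _ _ hα0 gα
    have hxβ : xβ = 0 := scancel _ _ hβ0 gβ
    have hx0 : x0 = 0 := by
      rw [g1, hxα, hxβ, zero_add, add_zero, add_zero] at hsum; exact hsum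
    exact ⟨g1, hx0, hxα, hxβ⟩
  -- Martindale peeling
  have peel3 : ∀ W : A, W ∈ eigSet e β →
      (∀ s' ∈ eigSet e (0:F), ∀ u' ∈ eigSet e α, ∀ s ∈ eigSet e (0:F),
        s' * (u' * (s * W)) = 0) → W = 0 := by
    intro W hW hval
    refine m5 W hW (fun s hs => ?_)
    refine m6 (s * W) (hmul0β hs hW) (fun u' hu' => ?_)
    refine m5 (u' * (s * W)) (hmulαβ hu' (hmul0β hs hW)) (fun s' hs' => ?_)
    exact hval s' hs' u' hu' s hs
  -- the core β-killing / value chains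
  have CCeval : ∀ (s' u' s x : A), Lmul [s', u', β⁻¹ • e, s] x
      = s' * (u' * ((β⁻¹ • e) * (s * x))) := fun _ _ _ _ => rfl
  have CCval : ∀ (n : ℕ) (s' u' s x : A), s' ∈ eigSet e (0:F) → u' ∈ eigSet e α →
      s ∈ eigSet e (0:F) → x ∈ eigSet e β →
      Lmul (List.replicate n (β⁻¹ • e) ++ [s', u', β⁻¹ • e, s]) x = s' * (u' * (s * x)) := by
    intro n s' u' s x hs' hu' hs hx
    rw [malg_lmul_append, CCeval, hEβ _ (hmul0β hs hx)]
    have hmem : s' * (u' * (s * x)) ∈ eigSet e β := hmul0β hs' (hmulαβ hu' (hmul0β hs hx))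
    rw [malg_lmul_rep β⁻¹ hmem, inv_mul_cancel₀ hβ0, one_pow, one_smul]
  have CCkill : ∀ (n : ℕ), n ≠ 0 → ∀ (s' u' s z1 z0 za : A), s' ∈ eigSet e (0:F) →
      u' ∈ eigSet e α → s ∈ eigSet e (0:F) → z1 ∈ eigSet e (1:F) → z0 ∈ eigSet e (0:F) →
      za ∈ eigSet e α →
      Lmul (List.replicate n (β⁻¹ • e) ++ [s', u', β⁻¹ • e, s]) (z1 + z0 + za) = 0 := by
    intro n hn s' u' s z1 z0 za hs' hu' hs hz1 hz0 hza
    rw [malg_lmul_append, CCeval]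
    have h1 : s * (z1 + z0 + za) = s * z0 + s * za := by
      rw [mul_add, mul_add, hmul01 hs hz1, zero_add]
    have h2 : (β⁻¹ • e) * (s * z0 + s * za) = (β⁻¹ * α) • (s * za) := by
      rw [mul_add, hE0 _ (hmul00 hs hz0), hEα _ (hmul0α hs hza), zero_add]
    obtain ⟨w1, hw1, w0, hw0, hw⟩ := h.faa u' hu' (s * za) (hmul0α hs hza)
    rw [h1, h2, mul_smul_comm, hw, mul_smul_comm, mul_add, hmul01 hs' hw1, zero_add]
    rw [malg_lmul_smul, malg_lmul_rep β⁻¹ (hmul00 hs' hw0), mul_zero,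
      zero_pow hn, zero_smul, smul_zero]
  have Meval : ∀ (s' u t x : A), Lmul [s', u, e, t] x = s' * (u * (e * (t * x))) :=
    fun _ _ _ _ => rfl
  have Mval : ∀ (n : ℕ) (s' u t x : A), s' ∈ eigSet e (0:F) → u ∈ eigSet e α →
      t ∈ eigSet e (0:F) → x ∈ eigSet e β →
      Lmul (List.replicate n (β⁻¹ • e) ++ [s', u, e, t]) x = β • (s' * (u * (t * x))) := by
    intro n s' u t x hs' hu ht hx
    rw [malg_lmul_append, Meval, heβ _ (hmul0β ht hx), mul_smul_comm, mul_smul_comm]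
    have hmem : s' * (u * (t * x)) ∈ eigSet e β := hmul0β hs' (hmulαβ hu (hmul0β ht hx))
    rw [malg_lmul_smul, malg_lmul_rep β⁻¹ hmem, inv_mul_cancel₀ hβ0, one_pow, one_smul]
  have Mkill1 : ∀ (n : ℕ) (s' u t x : A), t ∈ eigSet e (0:F) → x ∈ eigSet e (1:F) →
      Lmul (List.replicate n (β⁻¹ • e) ++ [s', u, e, t]) x = 0 := by
    intro n s' u t x ht hx
    rw [malg_lmul_append, Meval, hmul01 ht hx, mul_zero, mul_zero, mul_zero, malg_lmul_zero]
  have Mkill0 : ∀ (n : ℕ) (s' u t x : A), t ∈ eigSet e (0:F) → x ∈ eigSet e (0:F) →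
      Lmul (List.replicate n (β⁻¹ • e) ++ [s', u, e, t]) x = 0 := by
    intro n s' u t x ht hx
    rw [malg_lmul_append, Meval, he0 _ (hmul00 ht hx), mul_zero, mul_zero, malg_lmul_zero]
  have Mkillα : ∀ (n : ℕ), n ≠ 0 → ∀ (s' u t x : A), s' ∈ eigSet e (0:F) →
      u ∈ eigSet e α → t ∈ eigSet e (0:F) → x ∈ eigSet e α →
      Lmul (List.replicate n (β⁻¹ • e) ++ [s', u, e, t]) x = 0 := by
    intro n hn s' u t x hs' hu ht hx
    rw [malg_lmul_append, Meval, heα _ (hmul0α ht hx), mul_smul_comm, mul_smul_comm]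
    obtain ⟨w1, hw1, w0, hw0, hw⟩ := h.faa u hu (t * x) (hmul0α ht hx)
    rw [hw, mul_add, hmul01 hs' hw1, zero_add, malg_lmul_smul,
      malg_lmul_rep β⁻¹ (hmul00 hs' hw0), mul_zero, zero_pow hn, zero_smul, smul_zero]
  -- Step A : f [a0, bβ] = 0  (the (0,β) pair)
  obtain ⟨G1, hG1, G0, hG0, Ga, hGa, Gb, hGb, hGsum⟩ := h.decomp (f [a0, bβ])
  have hA1 : G1 = 0 ∧ G0 = 0 ∧ Ga = 0 ∧ Gb = 0 → True := fun _ => trivial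
  clear hA1
  have repEq : ∀ x : A, List.map (Lmul (List.replicate r e)) [x, bβ]
      = [Lmul (List.replicate r e) x, β ^ r • bβ] := by
    intro x
    simp [malg_lmul_rep_e hb]
  have hstepA1 : G1 = 0 ∧ Ga = 0 ∧ Gb = 0 := by
    have happ := hVs 1 (List.replicate r e) (by simp) [a0, bβ]
    rw [repEq a0, malg_lmul_rep_e h0 r, zero_pow hrne, zero_smul] at happ
    rw [f0x] at happ
    rw [hGsum, malg_lmul_add, malg_lmul_add, malg_lmul_add,
      malg_lmul_rep_e hG1, malg_lmul_rep_e hG0, malg_lmul_rep_e hGa, malg_lmul_rep_e hGb,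
      one_pow, one_smul, zero_pow hrne, zero_smul] at happ
    have heq : G1 + (0:A) + α ^ r • Ga + β ^ r • Gb = 0 := by
      rw [add_zero] at happ ⊢
      exact happ
    obtain ⟨q1, q0, qa, qb⟩ := d4 _ _ _ _ hG1 (malg_eig_zero e 0) (malg_eig_smul _ hGa)
      (malg_eig_smul _ hGb) heq
    exact ⟨q1, scancel _ _ (pow_ne_zero r hα0) qa, scancel _ _ (pow_ne_zero r hβ0) qb⟩
  have hGval : f [a0, bβ] = G0 := by
    rw [hGsum, hstepA1.1, hstepA1.2.1, hstepA1.2.2, zero_add, add_zero, add_zero]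
  -- A2 : kill the 0-component of f [a0, bβ]
  have hG0z : G0 = 0 := by
    have key : ∀ u ∈ eigSet e α, ∀ t ∈ eigSet e β, t * (u * G0) = 0 := by
      intro u hu t ht
      refine peel3 _ (hmulβα ht (hmulα0 hu hG0)) ?_
      intro s' hs' u' hu' s hs
      have hlen : ((List.replicate (7*r-6) (β⁻¹ • e) ++ [s', u', β⁻¹ • e, s]) ++ [t, u]).length
          = 7 * r := by
        simp [List.length_append, List.length_replicate]
        omega
      have happ := hVs 7 _ hlen [a0, bβ]
      -- entries
      have hbase : ∀ x : A, Lmul ((List.replicate (7*r-6) (β⁻¹ • e) ++ [s', u', β⁻¹ • e, s])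
          ++ [t, u]) x = Lmul (List.replicate (7*r-6) (β⁻¹ • e) ++ [s', u', β⁻¹ • e, s])
          (t * (u * x)) := by
        intro x
        rw [malg_lmul_append]
        rfl
      have hkillb : Lmul ((List.replicate (7*r-6) (β⁻¹ • e) ++ [s', u', β⁻¹ • e, s])
          ++ [t, u]) bβ = 0 := by
        rw [hbase]
        obtain ⟨z1, hz1, z0, hz0, za, hza, hz⟩ := h.fbb t ht (u * bβ) (hmulαβ hu hb)
        rw [hz]
        exact CCkill _ (by omega) _ _ _ _ _ _ hs' hu' hs hz1 hz0 hza
      have hXa0 : Lmul ((List.replicate (7*r-6) (β⁻¹ • e) ++ [s', u', β⁻¹ • e, s])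
          ++ [t, u]) a0 = s' * (u' * (s * (t * (u * a0)))) := by
        rw [hbase]
        exact CCval _ _ _ _ _ hs' hu' hs (hmulβα ht (hmulα0 hu h0))
      rw [List.map_cons, List.map_cons, List.map_nil, hkillb, hXa0, fx0] at happ
      rw [hGval] at happ
      rw [hbase, CCval _ _ _ _ _ hs' hu' hs (hmulβα ht (hmulα0 hu hG0))] at happ
      exact happ
    have key2 : ∀ u ∈ eigSet e α, u * G0 = 0 := by
      intro u hu
      exact m7 _ (hmulα0 hu hG0) (fun t ht => key u hu t ht)
    exact m2 _ hG0 key2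
  have hFz : f [a0, bβ] = 0 := by rw [hGval, hG0z]
  -- the main pair
  have hc : aβ * a0 ∈ eigSet e β := by rw [mul_comm]; exact h.f0b _ h0 _ ha
  obtain ⟨P1, hP1, P0, hP0, Pa, hPa, Pb, hPb, hPsum⟩ := h.decomp (f [aβ * a0, bβ])
  -- EXTR0 : P0 = 0
  have hP0z : P0 = 0 := by
    have happ := hVs 1 (List.replicate r (β⁻¹ • e)) (by simp) [aβ * a0, bβ]
    have hmap : List.map (Lmul (List.replicate r (β⁻¹ • e))) [aβ * a0, bβ] = [aβ * a0, bβ] := by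
      simp [malg_lmul_rep β⁻¹ hc, malg_lmul_rep β⁻¹ hb, inv_mul_cancel₀ hβ0]
    rw [hmap] at happ
    rw [hPsum, malg_lmul_add, malg_lmul_add, malg_lmul_add,
      malg_lmul_rep β⁻¹ hP1, malg_lmul_rep β⁻¹ hP0, malg_lmul_rep β⁻¹ hPa,
      malg_lmul_rep β⁻¹ hPb, inv_mul_cancel₀ hβ0, one_pow, one_smul,
      mul_zero, zero_pow hrne, zero_smul, add_zero] at happ
    -- happ : (β⁻¹*1)^r • P1 + (β⁻¹*α)^r • Pa + Pb = P1 + P0 + Pa + Pb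
    have hzero : (((β⁻¹*1)^r) • P1 + ((β⁻¹*α)^r) • Pa + Pb) - (P1 + P0 + Pa + Pb) = 0 := by
      rw [happ, sub_self]
    have heq : ((β⁻¹*1)^r - 1) • P1 + (-P0) + ((β⁻¹*α)^r - 1) • Pa + (0:A) = 0 := by
      rw [sub_smul, sub_smul, one_smul, one_smul]
      calc (β⁻¹*1)^r • P1 - P1 + -P0 + ((β⁻¹*α)^r • Pa - Pa) + (0:A)
          = (((β⁻¹*1)^r) • P1 + ((β⁻¹*α)^r) • Pa + Pb) - (P1 + P0 + Pa + Pb) := by abel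
        _ = 0 := hzero
    have hnegmem : -P0 ∈ eigSet e (0:F) := by
      rw [← neg_one_smul F P0]; exact malg_eig_smul _ hP0
    obtain ⟨_, q0, _, _⟩ := d4 _ _ _ _ (malg_eig_smul _ hP1) hnegmem
      (malg_eig_smul _ hPa) (malg_eig_zero e β) heq
    exact neg_eq_zero.mp q0
  -- EXTR1 : P1 = 0
  have hFeq1 : f [aβ * a0, bβ] = P1 + Pa + Pb := by
    rw [hPsum, hP0z, add_zero]
  have hP1z : P1 = 0 := by
    have key : ∀ u ∈ eigSet e α, u * P1 = 0 := by
      intro u hu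
      refine m7 _ (hmulα1 hu hP1) (fun t ht => ?_)
      refine peel3 _ (hmulβα ht (hmulα1 hu hP1)) ?_
      intro s' hs' u' hu' s hs
      have hAmem : t * (u * P1) ∈ eigSet e β := hmulβα ht (hmulα1 hu hP1)
      obtain ⟨w1, hw1, w0, hw0, hwaa⟩ := h.faa u hu Pa hPa
      have hBmem : t * (u * Pa) ∈ eigSet e β := by
        rw [hwaa, mul_add]
        exact malg_eig_add (hmulβ1 ht hw1) (hmulβ0 ht hw0)
      have hkillE : ∀ (n : ℕ), n ≠ 0 → ∀ x : A, x ∈ eigSet e β →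
          Lmul (List.replicate n (β⁻¹ • e) ++ [s', u', β⁻¹ • e, s]) (t * (u * x)) = 0 := by
        intro n hn x hx
        obtain ⟨z1, hz1, z0, hz0, za, hza, hz⟩ := h.fbb t ht (u * x) (hmulαβ hu hx)
        rw [hz]
        exact CCkill _ hn _ _ _ _ _ _ hs' hu' hs hz1 hz0 hza
      -- d = 0 equation
      have eq0 : s' * (u' * (s * (t * (u * P1)))) + s' * (u' * (s * (t * (u * Pa)))) = 0 := by
        have hlen : ((List.replicate (8*r-6) (β⁻¹ • e) ++ [s', u', β⁻¹ • e, s])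
            ++ [t, u]).length = 8 * r := by
          simp [List.length_append, List.length_replicate]; omega
        have happ := hVs 8 _ hlen [aβ * a0, bβ]
        have hn6 : 8*r-6 ≠ 0 := by omega
        have hb2 : ∀ x : A, Lmul ((List.replicate (8*r-6) (β⁻¹ • e) ++ [s', u', β⁻¹ • e, s])
            ++ [t, u]) x = Lmul (List.replicate (8*r-6) (β⁻¹ • e) ++ [s', u', β⁻¹ • e, s])
            (t * (u * x)) := by
          intro x; rw [malg_lmul_append]; rfl
        have hmapz : f (List.map (Lmul ((List.replicate (8*r-6) (β⁻¹ • e)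
            ++ [s', u', β⁻¹ • e, s]) ++ [t, u])) [aβ * a0, bβ]) = 0 := by
          rw [List.map_cons, List.map_cons, List.map_nil, hb2, hb2,
            hkillE _ hn6 _ hc, hkillE _ hn6 _ hb, f00]
        rw [hmapz] at happ
        rw [hFeq1, malg_lmul_add, malg_lmul_add, hb2, hb2, hb2,
          hkillE _ hn6 _ hPb,
          CCval _ _ _ _ _ hs' hu' hs hAmem, CCval _ _ _ _ _ hs' hu' hs hBmem, add_zero] at happ
        exact happ
      -- d = 1 equation
      have eq1 : s' * (u' * (s * (t * (u * P1)))) + α • (s' * (u' * (s * (t * (u * Pa))))) = 0 := by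
        have hlen : ((List.replicate (8*r-7) (β⁻¹ • e) ++ [s', u', β⁻¹ • e, s])
            ++ [t, u, e]).length = 8 * r := by
          simp [List.length_append, List.length_replicate]; omega
        have happ := hVs 8 _ hlen [aβ * a0, bβ]
        have hn7 : 8*r-7 ≠ 0 := by omega
        have hb2 : ∀ x : A, Lmul ((List.replicate (8*r-7) (β⁻¹ • e) ++ [s', u', β⁻¹ • e, s])
            ++ [t, u, e]) x = Lmul (List.replicate (8*r-7) (β⁻¹ • e) ++ [s', u', β⁻¹ • e, s])
            (t * (u * (e * x))) := by
          intro x; rw [malg_lmul_append]; rfl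
        have hbeta : ∀ x : A, x ∈ eigSet e β →
            Lmul ((List.replicate (8*r-7) (β⁻¹ • e) ++ [s', u', β⁻¹ • e, s]) ++ [t, u, e]) x
            = 0 := by
          intro x hx
          rw [hb2, heβ _ hx, mul_smul_comm, mul_smul_comm, malg_lmul_smul,
            hkillE _ hn7 _ hx, smul_zero]
        have hmapz : f (List.map (Lmul ((List.replicate (8*r-7) (β⁻¹ • e)
            ++ [s', u', β⁻¹ • e, s]) ++ [t, u, e])) [aβ * a0, bβ]) = 0 := by
          rw [List.map_cons, List.map_cons, List.map_nil, hbeta _ hc, hbeta _ hb, f00]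
        rw [hmapz] at happ
        rw [hFeq1, malg_lmul_add, malg_lmul_add, hb2, hb2, hbeta _ hPb,
          he1 _ hP1, heα _ hPa, mul_smul_comm, mul_smul_comm, malg_lmul_smul,
          CCval _ _ _ _ _ hs' hu' hs hAmem, CCval _ _ _ _ _ hs' hu' hs hBmem, add_zero] at happ
        exact happ
      have hBz : s' * (u' * (s * (t * (u * Pa)))) = 0 := by
        have hsub : ((1:F) - α) • (s' * (u' * (s * (t * (u * Pa))))) = 0 := by
          rw [sub_smul, one_smul]
          calc s' * (u' * (s * (t * (u * Pa)))) - α • (s' * (u' * (s * (t * (u * Pa)))))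
              = (s' * (u' * (s * (t * (u * P1)))) + s' * (u' * (s * (t * (u * Pa)))))
                - (s' * (u' * (s * (t * (u * P1)))) + α • (s' * (u' * (s * (t * (u * Pa))))))
                := by abel
            _ = 0 := by rw [eq0, eq1, sub_self]
        exact scancel _ _ (sub_ne_zero.mpr (Ne.symm h.hα1)) hsub
      rw [hBz, add_zero] at eq0
      exact eq0
    exact m1 _ hP1 key
  -- EXTR2 : Pa = 0
  have hFeq2 : f [aβ * a0, bβ] = Pa + Pb := by
    rw [hPsum, hP1z, hP0z, zero_add, zero_add]
  have hPaz : Pa = 0 := by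
    refine m7 _ hPa (fun t ht => ?_)
    refine peel3 _ (hmulβα ht hPa) ?_
    intro s' hs' u' hu' s hs
    have hn5 : 6*r-5 ≠ 0 := by omega
    have hlen : ((List.replicate (6*r-5) (β⁻¹ • e) ++ [s', u', β⁻¹ • e, s]) ++ [t]).length
        = 6 * r := by
      simp [List.length_append, List.length_replicate]; omega
    have happ := hVs 6 _ hlen [aβ * a0, bβ]
    have hb2 : ∀ x : A, Lmul ((List.replicate (6*r-5) (β⁻¹ • e) ++ [s', u', β⁻¹ • e, s])
        ++ [t]) x = Lmul (List.replicate (6*r-5) (β⁻¹ • e) ++ [s', u', β⁻¹ • e, s])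
        (t * x) := by
      intro x; rw [malg_lmul_append]; rfl
    have hkillE : ∀ x : A, x ∈ eigSet e β →
        Lmul (List.replicate (6*r-5) (β⁻¹ • e) ++ [s', u', β⁻¹ • e, s]) (t * x) = 0 := by
      intro x hx
      obtain ⟨z1, hz1, z0, hz0, za, hza, hz⟩ := h.fbb t ht x hx
      rw [hz]
      exact CCkill _ hn5 _ _ _ _ _ _ hs' hu' hs hz1 hz0 hza
    have hmapz : f (List.map (Lmul ((List.replicate (6*r-5) (β⁻¹ • e)
        ++ [s', u', β⁻¹ • e, s]) ++ [t])) [aβ * a0, bβ]) = 0 := by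
      rw [List.map_cons, List.map_cons, List.map_nil, hb2, hb2,
        hkillE _ hc, hkillE _ hb, f00]
    rw [hmapz] at happ
    rw [hFeq2, malg_lmul_add, hb2, hb2, hkillE _ hPb,
      CCval _ _ _ _ _ hs' hu' hs (hmulβα ht hPa), add_zero] at happ
    exact happ
  -- EXTR3 : Pb = 0 via the special product structure
  have hFeq3 : f [aβ * a0, bβ] = Pb := by
    rw [hPsum, hP1z, hP0z, hPaz, zero_add, zero_add, zero_add]
  have hPbz : Pb = 0 := by
    obtain ⟨z1, hz1, z0, hz0, za, hza, hzz⟩ := h.fbb aβ ha bβ hb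
    have hC1 : Lmul (List.replicate (r-1) (β⁻¹ • e)) z1 ∈ eigSet e (1:F) := by
      rw [malg_lmul_rep β⁻¹ hz1]; exact malg_eig_smul _ hz1
    have hC0 : Lmul (List.replicate (r-1) (β⁻¹ • e)) z0 ∈ eigSet e (0:F) := by
      rw [malg_lmul_rep β⁻¹ hz0]; exact malg_eig_smul _ hz0
    have hCa : Lmul (List.replicate (r-1) (β⁻¹ • e)) za ∈ eigSet e α := by
      rw [malg_lmul_rep β⁻¹ hza]; exact malg_eig_smul _ hza
    -- images under the inner operator L
    have hLa0 : Lmul (List.replicate (r-1) (β⁻¹ • e) ++ [β⁻¹ • e + aβ]) a0 = aβ * a0 := by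
      have h1 : Lmul [β⁻¹ • e + aβ] a0 = aβ * a0 := by
        show (β⁻¹ • e + aβ) * a0 = aβ * a0
        rw [add_mul, hE0 _ h0, zero_add]
      rw [malg_lmul_append, h1, malg_lmul_rep β⁻¹ hc, inv_mul_cancel₀ hβ0, one_pow, one_smul]
    have hLbβ : Lmul (List.replicate (r-1) (β⁻¹ • e) ++ [β⁻¹ • e + aβ]) bβ
        = bβ + (Lmul (List.replicate (r-1) (β⁻¹ • e)) z1
          + Lmul (List.replicate (r-1) (β⁻¹ • e)) z0
          + Lmul (List.replicate (r-1) (β⁻¹ • e)) za) := by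
      have h1 : Lmul [β⁻¹ • e + aβ] bβ = bβ + (z1 + z0 + za) := by
        show (β⁻¹ • e + aβ) * bβ = bβ + (z1 + z0 + za)
        rw [add_mul, hEβ _ hb, hzz]
      rw [malg_lmul_append, h1, malg_lmul_add, malg_lmul_add, malg_lmul_add,
        malg_lmul_rep β⁻¹ hb, inv_mul_cancel₀ hβ0, one_pow, one_smul]
    have key : ∀ t ∈ eigSet e (0:F), t * Pb = 0 := by
      intro t ht
      refine m6 (t * Pb) (hmul0β ht hPb) (fun u hu => ?_)
      refine m5 (u * (t * Pb)) (hmulαβ hu (hmul0β ht hPb)) (fun s' hs' => ?_)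
      have hnM : 6*r-4 ≠ 0 := by omega
      have hlenM : (List.replicate (6*r-4) (β⁻¹ • e) ++ [s', u, e, t]).length = 6 * r := by
        simp [List.length_append, List.length_replicate]; omega
      have hlenFull : ((List.replicate (6*r-4) (β⁻¹ • e) ++ [s', u, e, t])
          ++ (List.replicate (r-1) (β⁻¹ • e) ++ [β⁻¹ • e + aβ])).length = 7 * r := by
        simp [List.length_append, List.length_replicate]; omega
      have happ1 := hVs 7 _ hlenFull [a0, bβ]
      rw [hFz, malg_lmul_zero] at happ1
      have hent1 : Lmul ((List.replicate (6*r-4) (β⁻¹ • e) ++ [s', u, e, t])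
          ++ (List.replicate (r-1) (β⁻¹ • e) ++ [β⁻¹ • e + aβ])) a0
          = Lmul (List.replicate (6*r-4) (β⁻¹ • e) ++ [s', u, e, t]) (aβ * a0) := by
        rw [malg_lmul_append, hLa0]
      have hent2 : Lmul ((List.replicate (6*r-4) (β⁻¹ • e) ++ [s', u, e, t])
          ++ (List.replicate (r-1) (β⁻¹ • e) ++ [β⁻¹ • e + aβ])) bβ
          = Lmul (List.replicate (6*r-4) (β⁻¹ • e) ++ [s', u, e, t]) bβ := by
        rw [malg_lmul_append, hLbβ, malg_lmul_add, malg_lmul_add, malg_lmul_add,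
          Mkill1 _ _ _ _ _ ht hC1, Mkill0 _ _ _ _ _ ht hC0,
          Mkillα _ hnM _ _ _ _ hs' hu ht hCa]
        simp only [add_zero]
      rw [List.map_cons, List.map_cons, List.map_nil, hent1, hent2] at happ1
      have happ2 := hVs 6 _ hlenM [aβ * a0, bβ]
      rw [List.map_cons, List.map_cons, List.map_nil, ← happ1] at happ2
      rw [hFeq3, Mval _ _ _ _ _ hs' hu ht hPb] at happ2
      exact scancel _ _ hβ0 happ2
    exact m5 _ hPb key
  rw [hFeq3, hPbz]
end
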